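/- In the CoinPusher system, if the mempool of σ contains exactly one transaction tx = push(P, v) with P honest, then the MEV of σ equals σ.s.bal τ₀ + v if v < threshold and v ≤ σ.s.wal τ₀, and equals σ.s.bal τ₀ otherwise. The optimal strategy is: adversary pushes the threshold amount (winning the balance), then the mempool transaction is executed, then the adversary pushes the threshold amount again. -/
import Mathlib


open scoped NNReal

/-! The CoinPusher contract: one token type τ₀ (priced at 1), a positive
winning threshold, a contract balance, a cumulative honest wallet, and a
mempool of `push` transactions. A transaction `push P v` transfers `v > 0`
tokens from `P` to the contract (failing if an honest `P` lacks the funds;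
the adversary has unbounded funds); if the resulting balance reaches the
threshold, the whole balance is immediately paid back to `P`. -/

inductive Participant where
  | Hon : String → Participant
  | Adv : Participant
deriving DecidableEq

inductive Token where
  | τ₀ : Token
deriving DecidableEq

abbrev TxId := ℕ

/-- A `push` transaction: participant `P` sends `v > 0` tokens to the contract. -/
structure Tx where
  P : Participant
  v : ℝ
  v_pos : 0 < v

/-- The honest part of the system state. -/
structure CPState where
  threshold : ℝ≥0
  threshold_pos : 0 < threshold
  bal : Token → ℝ≥0
  wal : Token → ℝ≥0
  mempool : List (TxId × Tx)

/-- System state: adversary wallet plus honest state. -/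
structure CPSys where
  Δ : Token → ℝ
  s : CPState

/-- Semantics of a `push P v` transaction. -/
noncomputable def pushSem (P : Participant) (v : ℝ) (σ : CPSys) : Option CPSys :=
  if 0 < v ∧ (P = .Adv ∨ v ≤ (σ.s.wal .τ₀ : ℝ)) then
    let newbal : ℝ≥0 := σ.s.bal .τ₀ + v.toNNReal
    -- if the threshold is reached, the whole balance is paid back to P
    let payout : ℝ≥0 := if σ.s.threshold ≤ newbal then newbal else 0
    some { Δ := if P = .Adv then fun τ => σ.Δ τ - v + (payout : ℝ) else σ.Δ
         , s := { threshold := σ.s.threshold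
                , threshold_pos := σ.s.threshold_pos
                , bal := fun _ => newbal - payout
                , wal := if P = .Adv then σ.s.wal
                         else fun τ => σ.s.wal τ - v.toNNReal + payout
                , mempool := σ.s.mempool } }
  else none

/-- Adversarial moves: craft an adversary-signed push, or execute a mempool
transaction. -/
inductive Move where
  | adv : (v : ℝ) → 0 < v → Move
  | mempool : TxId → Move

/-- Semantics of adversarial moves. A successfully executed mempool transaction
is removed from the mempool. -/
noncomputable def semMove (σ : CPSys) : Move → Option CPSys
  | .adv v _ => pushSem .Adv v σ
  | .mempool id =>
    match σ.s.mempool.find? (fun p => p.1 == id) with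
    | none => none
    | some (_, tx) =>
      match pushSem tx.P tx.v σ with
      | none => none
      | some σ' =>
        some { Δ := σ'.Δ
             , s := { threshold := σ'.s.threshold
                    , threshold_pos := σ'.s.threshold_pos
                    , bal := σ'.s.bal, wal := σ'.s.wal
                    , mempool := σ.s.mempool.filter (fun p => p.1 != id) } }

/-- Composed effect of a list of moves (failing moves are skipped). -/
noncomputable def semMoves (σ : CPSys) : List Move → CPSys
  | [] => σ
  | m :: ms =>
    match semMove σ m with
    | none => semMoves σ ms
    | some σ' => semMoves σ' ms

/-- Adversarial gain of a list of moves (token τ₀ has unit price). -/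
noncomputable def gainMoves (σ : CPSys) (tr : List Move) : ℝ :=
  (semMoves σ tr).Δ .τ₀ - σ.Δ .τ₀

/-- Maximal extractable value. -/
structure MEV (σ : CPSys) (v : ℝ) : Prop where
  trace_reaches_v : ∃ tr, gainMoves σ tr = v
  other_traces_worse : ∀ tr, gainMoves σ tr ≤ v

namespace CPAux

/-- Invariant preserved by all moves, starting from a state whose mempool is
exactly `[(id, tx)]`: the threshold stays `T0`, and the mempool is either
still `[(id, tx)]` (with the honest wallet unchanged) or empty. -/
def Inv (T0 W0 : ℝ≥0) (id : TxId) (tx : Tx) (σ : CPSys) : Prop :=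
  σ.s.threshold = T0 ∧
    ((σ.s.mempool = [(id, tx)] ∧ σ.s.wal .τ₀ = W0) ∨ σ.s.mempool = [])

/-- A potential that never increases under moves. -/
noncomputable def F (T0 W0 : ℝ≥0) (tx : Tx) (σ : CPSys) : ℝ :=
  σ.Δ .τ₀ + (σ.s.bal .τ₀ : ℝ) +
    (if σ.s.mempool.isEmpty then 0
     else if tx.v < (T0 : ℝ) ∧ tx.v ≤ (W0 : ℝ) then tx.v else 0)

lemma step (T0 W0 : ℝ≥0) (id : TxId) (tx : Tx) (hhon : tx.P ≠ .Adv)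
    (σ : CPSys) (hInv : Inv T0 W0 id tx σ) (m : Move) (σ' : CPSys)
    (h : semMove σ m = some σ') :
    Inv T0 W0 id tx σ' ∧ F T0 W0 tx σ' ≤ F T0 W0 tx σ := by
  obtain ⟨hT, hmp⟩ := hInv
  cases m with
  | adv v hv =>
    simp only [semMove] at h
    rw [pushSem, if_pos ⟨hv, Or.inl rfl⟩] at h
    simp only [Option.some.injEq] at h
    subst h
    refine ⟨⟨hT, ?_⟩, ?_⟩
    · simpa using hmp
    · by_cases hp : σ.s.threshold ≤ σ.s.bal .τ₀ + Real.toNNReal v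
      · simp only [F, if_pos hp, eq_self_iff_true, if_true, tsub_self,
          NNReal.coe_zero, NNReal.coe_add, Real.coe_toNNReal v hv.le]
        apply le_of_eq; ring
      · simp only [F, if_neg hp, eq_self_iff_true, if_true, tsub_zero,
          NNReal.coe_zero, NNReal.coe_add, Real.coe_toNNReal v hv.le]
        apply le_of_eq; ring
  | mempool i =>
    simp only [semMove] at h
    rcases hmp with ⟨hmp, hW⟩ | hmp
    · rw [hmp] at h
      by_cases hid : id = i
      · subst hid
        simp only [List.find?, beq_self_eq_true] at h
        by_cases hw : tx.v ≤ (σ.s.wal .τ₀ : ℝ)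
        · rw [pushSem, if_pos ⟨tx.v_pos, Or.inr hw⟩] at h
          simp only [Option.some.injEq, if_neg hhon] at h
          subst h
          refine ⟨⟨hT, Or.inr (by simp)⟩, ?_⟩
          have hb := (σ.s.bal .τ₀).coe_nonneg
          by_cases hp : σ.s.threshold ≤ σ.s.bal .τ₀ + Real.toNNReal tx.v
          · simp only [F, if_pos hp, hmp, tsub_self, NNReal.coe_zero]
            norm_num
            have hB : (0:ℝ) ≤ if tx.v < (T0 : ℝ) ∧ tx.v ≤ (W0 : ℝ) then tx.v else 0 := by
              split
              · exact le_of_lt tx.v_pos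
              · exact le_refl 0
            linarith
          · have hvT : tx.v < (T0 : ℝ) := by
              have h2 : ¬ ((T0 : ℝ) ≤ (σ.s.bal .τ₀ : ℝ) + tx.v) := by
                rw [← hT]
                intro hc
                apply hp
                rw [← NNReal.coe_le_coe]
                push_cast [Real.coe_toNNReal tx.v tx.v_pos.le]
                exact hc
              linarith
            simp only [F, if_neg hp, hmp, tsub_zero, NNReal.coe_add,
              Real.coe_toNNReal tx.v tx.v_pos.le]
            norm_num
            rw [if_pos ⟨hvT, hW ▸ hw⟩]
            linarith
        · rw [pushSem, if_neg (by
            rintro ⟨-, hor⟩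
            rcases hor with hadv | hle
            · exact hhon hadv
            · exact hw hle)] at h
          exact absurd h (by simp)
      · have hbeq : (((id, tx).1 : TxId) == i) = false := by simpa using hid
        simp only [List.find?, hbeq, List.find?] at h
        exact absurd h (by simp)
    · rw [hmp] at h
      simp only [List.find?] at h
      exact absurd h (by simp)

lemma runs (T0 W0 : ℝ≥0) (id : TxId) (tx : Tx) (hhon : tx.P ≠ .Adv) :
    ∀ (tr : List Move) (σ : CPSys), Inv T0 W0 id tx σ →
      Inv T0 W0 id tx (semMoves σ tr) ∧ F T0 W0 tx (semMoves σ tr) ≤ F T0 W0 tx σ := by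
  intro tr
  induction tr with
  | nil => intro σ hσ; exact ⟨hσ, le_refl _⟩
  | cons m ms ih =>
    intro σ hσ
    rw [semMoves]
    rcases heq : semMove σ m with _ | σ'
    · exact ih σ hσ
    · obtain ⟨h1, h2⟩ := step T0 W0 id tx hhon σ hσ m σ' heq
      obtain ⟨h3, h4⟩ := ih σ' h1
      exact ⟨h3, h4.trans h2⟩

/-- An adversary push that reaches the threshold: the adversary gains the
current balance and the balance resets to zero. -/
lemma semMove_adv_hit (σ : CPSys) (v : ℝ) (hv : 0 < v)
    (hge : (σ.s.threshold : ℝ) ≤ (σ.s.bal .τ₀ : ℝ) + v) :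
    semMove σ (.adv v hv) =
      some { Δ := fun τ => σ.Δ τ + (σ.s.bal .τ₀ : ℝ)
           , s := { threshold := σ.s.threshold, threshold_pos := σ.s.threshold_pos
                  , bal := fun _ => 0, wal := σ.s.wal, mempool := σ.s.mempool } } := by
  simp only [semMove]
  rw [pushSem, if_pos ⟨hv, Or.inl rfl⟩]
  have hp : σ.s.threshold ≤ σ.s.bal .τ₀ + v.toNNReal := by
    rw [← NNReal.coe_le_coe]
    push_cast [Real.coe_toNNReal v hv.le]
    exact hge
  simp only [if_pos hp]
  simp only [eq_self_iff_true, if_true, Option.some.injEq,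
    CPSys.mk.injEq, CPState.mk.injEq]
  refine ⟨funext fun τ => by push_cast [Real.coe_toNNReal v hv.le]; ring, by simp⟩

lemma semMoves_cons_some {σ σ' : CPSys} {m : Move} {ms : List Move}
    (h : semMove σ m = some σ') : semMoves σ (m :: ms) = semMoves σ' ms := by
  rw [semMoves, h]

lemma semMoves_cons_none {σ : CPSys} {m : Move} {ms : List Move}
    (h : semMove σ m = none) : semMoves σ (m :: ms) = semMoves σ ms := by
  rw [semMoves, h]

/-- Executing the unique mempool transaction when the honest wallet suffices. -/
lemma semMove_mempool_ok (σ : CPSys) (id : TxId) (tx : Tx)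
    (hmp : σ.s.mempool = [(id, tx)]) (hhon : tx.P ≠ .Adv)
    (hw : tx.v ≤ (σ.s.wal .τ₀ : ℝ)) :
    semMove σ (.mempool id) =
      some { Δ := σ.Δ
           , s := { threshold := σ.s.threshold, threshold_pos := σ.s.threshold_pos
                  , bal := fun _ => σ.s.bal .τ₀ + tx.v.toNNReal -
                      (if σ.s.threshold ≤ σ.s.bal .τ₀ + tx.v.toNNReal
                       then σ.s.bal .τ₀ + tx.v.toNNReal else 0)
                  , wal := fun τ => σ.s.wal τ - tx.v.toNNReal +
                      (if σ.s.threshold ≤ σ.s.bal .τ₀ + tx.v.toNNReal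
                       then σ.s.bal .τ₀ + tx.v.toNNReal else 0)
                  , mempool := [] } } := by
  simp only [semMove, hmp, List.find?, beq_self_eq_true]
  rw [pushSem, if_pos ⟨tx.v_pos, Or.inr hw⟩]
  simp only [if_neg hhon, Option.some.injEq, CPSys.mk.injEq, CPState.mk.injEq]
  simp

/-- Executing the unique mempool transaction fails when the wallet is short. -/
lemma semMove_mempool_fail (σ : CPSys) (id : TxId) (tx : Tx)
    (hmp : σ.s.mempool = [(id, tx)]) (hhon : tx.P ≠ .Adv)
    (hw : ¬ tx.v ≤ (σ.s.wal .τ₀ : ℝ)) :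
    semMove σ (.mempool id) = none := by
  simp only [semMove, hmp, List.find?, beq_self_eq_true]
  rw [pushSem, if_neg (by
    rintro ⟨-, hor⟩
    rcases hor with hadv | hle
    · exact hhon hadv
    · exact hw hle)]

end CPAux

/-- If the mempool contains exactly one honest transaction `push P v`, the MEV
equals `bal + v` when `v < threshold` and `v ≤ wal`, and `bal` otherwise; the
optimal strategy pushes the threshold amount, then executes the mempool
transaction, then pushes the threshold amount again. -/
theorem MEV_CoinPusher_singleton (σ : CPSys) (id : TxId) (tx : Tx)
    (hmp : σ.s.mempool = [(id, tx)]) (hhon : tx.P ≠ .Adv) :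
    MEV σ (if tx.v < (σ.s.threshold : ℝ) ∧ tx.v ≤ (σ.s.wal .τ₀ : ℝ)
           then (σ.s.bal .τ₀ : ℝ) + tx.v
           else (σ.s.bal .τ₀ : ℝ)) ∧
    gainMoves σ
        [ Move.adv (σ.s.threshold : ℝ) (by exact_mod_cast σ.s.threshold_pos)
        , Move.mempool id
        , Move.adv (σ.s.threshold : ℝ) (by exact_mod_cast σ.s.threshold_pos) ]
      = (if tx.v < (σ.s.threshold : ℝ) ∧ tx.v ≤ (σ.s.wal .τ₀ : ℝ)
         then (σ.s.bal .τ₀ : ℝ) + tx.v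
         else (σ.s.bal .τ₀ : ℝ)) := by
  have hpos : (0:ℝ) < (σ.s.threshold : ℝ) := by exact_mod_cast σ.s.threshold_pos
  have hb := (σ.s.bal .τ₀).coe_nonneg
  have hv := tx.v_pos
  -- the state after the first adversary push
  have e1 := CPAux.semMove_adv_hit σ (σ.s.threshold : ℝ) hpos (by linarith)
  -- the gain of the canonical trace
  have hgain : gainMoves σ
        [ Move.adv (σ.s.threshold : ℝ) (by exact_mod_cast σ.s.threshold_pos)
        , Move.mempool id
        , Move.adv (σ.s.threshold : ℝ) (by exact_mod_cast σ.s.threshold_pos) ]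
      = (if tx.v < (σ.s.threshold : ℝ) ∧ tx.v ≤ (σ.s.wal .τ₀ : ℝ)
         then (σ.s.bal .τ₀ : ℝ) + tx.v
         else (σ.s.bal .τ₀ : ℝ)) := by
    rw [gainMoves, CPAux.semMoves_cons_some e1]
    by_cases hc : tx.v < (σ.s.threshold : ℝ) ∧ tx.v ≤ (σ.s.wal .τ₀ : ℝ)
    · obtain ⟨hvT, hvW⟩ := hc
      have e2 := CPAux.semMove_mempool_ok
        { Δ := fun τ => σ.Δ τ + (σ.s.bal .τ₀ : ℝ)
        , s := { threshold := σ.s.threshold, threshold_pos := σ.s.threshold_pos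
               , bal := fun _ => 0, wal := σ.s.wal, mempool := σ.s.mempool } }
        id tx hmp hhon hvW
      dsimp only at e2
      have hnp : ¬ σ.s.threshold ≤ tx.v.toNNReal := by
        intro hcon
        rw [← NNReal.coe_le_coe] at hcon
        push_cast [Real.coe_toNNReal tx.v hv.le] at hcon
        linarith
      simp only [zero_add, if_neg hnp, tsub_zero, add_zero] at e2
      rw [CPAux.semMoves_cons_some e2]
      have e3 := CPAux.semMove_adv_hit
        { Δ := fun τ => σ.Δ τ + (σ.s.bal .τ₀ : ℝ)
        , s := { threshold := σ.s.threshold, threshold_pos := σ.s.threshold_pos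
               , bal := fun _ => tx.v.toNNReal
               , wal := fun τ => σ.s.wal τ - tx.v.toNNReal, mempool := [] } }
        (σ.s.threshold : ℝ) hpos
        (by
          dsimp only
          push_cast [Real.coe_toNNReal tx.v hv.le]
          linarith)
      rw [CPAux.semMoves_cons_some e3, semMoves, if_pos ⟨hvT, hvW⟩]
      dsimp only
      push_cast [Real.coe_toNNReal tx.v hv.le]
      ring
    · by_cases hw : tx.v ≤ (σ.s.wal .τ₀ : ℝ)
      · have hT2 : (σ.s.threshold : ℝ) ≤ tx.v := le_of_not_gt fun h => hc ⟨h, hw⟩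
        have e2 := CPAux.semMove_mempool_ok
          { Δ := fun τ => σ.Δ τ + (σ.s.bal .τ₀ : ℝ)
          , s := { threshold := σ.s.threshold, threshold_pos := σ.s.threshold_pos
                 , bal := fun _ => 0, wal := σ.s.wal, mempool := σ.s.mempool } }
          id tx hmp hhon hw
        dsimp only at e2
        have hp2 : σ.s.threshold ≤ tx.v.toNNReal := by
          rw [← NNReal.coe_le_coe]
          push_cast [Real.coe_toNNReal tx.v hv.le]
          linarith
        simp only [zero_add, if_pos hp2, tsub_self] at e2
        rw [CPAux.semMoves_cons_some e2]
        have e3 := CPAux.semMove_adv_hit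
          { Δ := fun τ => σ.Δ τ + (σ.s.bal .τ₀ : ℝ)
          , s := { threshold := σ.s.threshold, threshold_pos := σ.s.threshold_pos
                 , bal := fun _ => 0
                 , wal := fun τ => σ.s.wal τ - tx.v.toNNReal + tx.v.toNNReal
                 , mempool := [] } }
          (σ.s.threshold : ℝ) hpos
          (by dsimp only; push_cast; linarith)
        rw [CPAux.semMoves_cons_some e3, semMoves, if_neg hc]
        dsimp only
        push_cast
        ring
      · have e2 := CPAux.semMove_mempool_fail
          { Δ := fun τ => σ.Δ τ + (σ.s.bal .τ₀ : ℝ)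
          , s := { threshold := σ.s.threshold, threshold_pos := σ.s.threshold_pos
                 , bal := fun _ => 0, wal := σ.s.wal, mempool := σ.s.mempool } }
          id tx hmp hhon hw
        rw [CPAux.semMoves_cons_none e2]
        have e3 := CPAux.semMove_adv_hit
          { Δ := fun τ => σ.Δ τ + (σ.s.bal .τ₀ : ℝ)
          , s := { threshold := σ.s.threshold, threshold_pos := σ.s.threshold_pos
                 , bal := fun _ => 0, wal := σ.s.wal, mempool := σ.s.mempool } }
          (σ.s.threshold : ℝ) hpos
          (by dsimp only; push_cast; linarith)
        rw [CPAux.semMoves_cons_some e3, semMoves, if_neg hc]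
        dsimp only
        push_cast
        ring
  -- the upper bound over all traces
  have hub : ∀ tr, gainMoves σ tr ≤
      (if tx.v < (σ.s.threshold : ℝ) ∧ tx.v ≤ (σ.s.wal .τ₀ : ℝ)
       then (σ.s.bal .τ₀ : ℝ) + tx.v
       else (σ.s.bal .τ₀ : ℝ)) := by
    intro tr
    obtain ⟨-, hF⟩ := CPAux.runs σ.s.threshold (σ.s.wal .τ₀) id tx hhon tr σ
      ⟨rfl, Or.inl ⟨hmp, rfl⟩⟩
    simp only [CPAux.F, hmp, List.isEmpty_cons, Bool.false_eq_true, if_false] at hF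
    have h1 := ((semMoves σ tr).s.bal .τ₀).coe_nonneg
    rw [gainMoves]
    split_ifs with hc
    · simp only [if_pos hc] at hF
      have h2 : (0:ℝ) ≤ (if (semMoves σ tr).s.mempool.isEmpty then 0 else tx.v) := by
        split_ifs
        · exact le_refl 0
        · exact hv.le
      linarith
    · simp only [if_neg hc, ite_self] at hF
      linarith
  exact ⟨⟨⟨_, hgain⟩, hub⟩, hgain⟩
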